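/- For every natural number k there exists a polynomial P in one variable with nonnegative real coefficients (depending only on k) such that for all real numbers a, b, c, K with 0 ≤ a ≤ b, c ≥ 0, K ≥ 0 and max(c,a) > 0, one has ∫_a^b (max(c,x))^{−1} · (ln₊(K/x))^k dx ≤ P( ln₊( max(K,b) / max(c,a) ) ). -/

import Mathlib

/-!
Put `m = max c a` and `L = ln₊ (max K b / m)`, and split `[a, b]` at `m`.
Beyond `m` the integrand is at most `L ^ k / x`, whose integral up to `b` is at most
`L ^ (k + 1)`. Below `m` we have `(max c x)⁻¹ ≤ m⁻¹` and
`ln₊ (K / x) ≤ L + log (m / x)`, while `log (m / x) ^ k ≤ (2k) ^ k (m / x) ^ (1/2)`;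
so the integrand is at most `2 ^ k (L ^ k + (2k) ^ k) / √(m x)`, whose integral over `[0, m]` is
`2 ^ (k + 1) (L ^ k + (2k) ^ k)`.
-/

open MeasureTheory Real Set intervalIntegral Polynomial

/-- The positive part of the logarithm: `ln₊ x = log (max x 1)`. -/
noncomputable def lnp (x : ℝ) : ℝ := Real.log (max x 1)

lemma lnp_nonneg (x : ℝ) : 0 ≤ lnp x := log_nonneg (le_max_right _ _)

lemma lnp_mono : Monotone lnp := fun _ _ h =>
  log_le_log (one_pos.trans_le (le_max_right _ _)) (max_le_max_right 1 h)

lemma lnp_of_one_le {x : ℝ} (hx : 1 ≤ x) : lnp x = log x := by rw [lnp, max_eq_left hx]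

lemma log_le_lnp {x : ℝ} (hx : 0 < x) : log x ≤ lnp x := log_le_log hx (le_max_left _ _)

lemma lnp_mul_le {x y : ℝ} (hy : 0 ≤ y) : lnp (x * y) ≤ lnp x + lnp y := by
  have hmax : max (x * y) 1 ≤ max x 1 * max y 1 :=
    max_le (mul_le_mul (le_max_left _ _) (le_max_left _ _) hy (by positivity))
      (one_le_mul_of_one_le_of_one_le (le_max_right _ _) (le_max_right _ _))
  calc lnp (x * y) ≤ log (max x 1 * max y 1) := log_le_log (by positivity) hmax
    _ = lnp x + lnp y := log_mul (by positivity) (by positivity)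

@[fun_prop]
lemma measurable_lnp : Measurable lnp := measurable_log.comp (measurable_id.max measurable_const)

lemma lnp_pow_le_rpow (k : ℕ) {ε z : ℝ} (hε : 0 < ε) (hz : 1 ≤ z) :
    lnp z ^ k ≤ (k / ε) ^ k * z ^ ε := by
  rcases Nat.eq_zero_or_pos k with rfl | hk
  · simpa using one_le_rpow hz hε.le
  have hk' : (0 : ℝ) < k := Nat.cast_pos.mpr hk
  have hlog : log z ≤ k / ε * z ^ (ε / k) := by
    calc log z ≤ z ^ (ε / k) / (ε / k) := log_le_rpow_div (zero_le_one.trans hz) (by positivity)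
      _ = k / ε * z ^ (ε / k) := by field_simp
  calc lnp z ^ k = log z ^ k := by rw [lnp_of_one_le hz]
    _ ≤ (k / ε * z ^ (ε / k)) ^ k := pow_le_pow_left₀ (log_nonneg hz) hlog k
    _ = (k / ε) ^ k * z ^ ε := by
      rw [mul_pow, ← rpow_natCast (z ^ _), ← rpow_mul (zero_le_one.trans hz),
        div_mul_cancel₀ ε hk'.ne']

lemma add_lnp_pow_le (k : ℕ) {ε L z : ℝ} (hε : 0 < ε) (hL : 0 ≤ L) (hz : 1 ≤ z) :
    (L + lnp z) ^ k ≤ 2 ^ k * (L ^ k + (k / ε) ^ k) * z ^ ε := by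
  have hzε : 1 ≤ z ^ ε := one_le_rpow hz hε.le
  calc (L + lnp z) ^ k ≤ 2 ^ (k - 1) * (L ^ k + lnp z ^ k) := add_pow_le hL (lnp_nonneg z) k
    _ ≤ 2 ^ k * (L ^ k * z ^ ε + (k / ε) ^ k * z ^ ε) :=
      mul_le_mul (pow_le_pow_right₀ one_le_two (Nat.sub_le k 1))
        (add_le_add (le_mul_of_one_le_right (pow_nonneg hL k) hzε) (lnp_pow_le_rpow k hε hz))
        (add_nonneg (pow_nonneg hL k) (pow_nonneg (lnp_nonneg z) k)) (by positivity)
    _ = 2 ^ k * (L ^ k + (k / ε) ^ k) * z ^ ε := by ring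

lemma integral_rpow_neg_half_le {a d m : ℝ} (ha : 0 ≤ a) (had : a ≤ d) (hdm : d ≤ m) :
    ∫ x in a..d, m ^ (-(1 / 2) : ℝ) * x ^ (-(1 / 2) : ℝ) ≤ 2 := by
  have hint :
      ∫ x in a..d, x ^ (-(1 / 2) : ℝ) = 2 * (d ^ (1 / 2 : ℝ) - a ^ (1 / 2 : ℝ)) := by
    rw [integral_rpow (Or.inl (by norm_num))]
    norm_num
    ring
  have hm : 0 ≤ m := ha.trans (had.trans hdm)
  have hd : d ^ (1 / 2 : ℝ) ≤ m ^ (1 / 2 : ℝ) := rpow_le_rpow (ha.trans had) hdm (by norm_num)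
  rw [intervalIntegral.integral_const_mul, hint, rpow_neg hm]
  calc (m ^ (1 / 2 : ℝ))⁻¹ * (2 * (d ^ (1 / 2 : ℝ) - a ^ (1 / 2 : ℝ)))
      ≤ (m ^ (1 / 2 : ℝ))⁻¹ * (2 * m ^ (1 / 2 : ℝ)) := by
        gcongr
        linarith [rpow_nonneg ha (1 / 2 : ℝ)]
    _ ≤ 2 := by
        rw [mul_left_comm]
        exact mul_le_of_le_one_right zero_le_two (inv_mul_le_one_of_le₀ le_rfl (by positivity))

lemma intervalIntegrable_of_nonneg_of_le {f g : ℝ → ℝ} {a b : ℝ} (hab : a ≤ b)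
    (hf : Measurable f) (hf0 : ∀ x ∈ Ioc a b, 0 ≤ f x) (hfg : ∀ x ∈ Ioc a b, f x ≤ g x)
    (hg : IntervalIntegrable g volume a b) : IntervalIntegrable f volume a b := by
  refine hg.mono_fun' hf.aestronglyMeasurable (ae_restrict_of_forall_mem measurableSet_uIoc ?_)
  intro x hx
  rw [uIoc_of_le hab] at hx
  exact (Real.norm_of_nonneg (hf0 x hx)).trans_le (hfg x hx)

section Integrand

variable {c K : ℝ} (k : ℕ)

lemma integrand_nonneg {x : ℝ} (hx : 0 ≤ x) : 0 ≤ (max c x)⁻¹ * lnp (K / x) ^ k :=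
  mul_nonneg (inv_nonneg.mpr (hx.trans (le_max_right c x))) (pow_nonneg (lnp_nonneg _) k)

lemma measurable_integrand : Measurable fun x => (max c x)⁻¹ * lnp (K / x) ^ k := by
  fun_prop

lemma integrand_le_of_le {m x : ℝ} (hx : 0 < x) (hxm : x ≤ m)
    (hm : m ≤ max c x) :
    (max c x)⁻¹ * lnp (K / x) ^ k ≤
      2 ^ k * (lnp (K / m) ^ k + (2 * k) ^ k) * (m ^ (-(1 / 2) : ℝ) * x ^ (-(1 / 2) : ℝ)) := by
  have hm0 : 0 < m := hx.trans_le hxm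
  have hsplit : lnp (K / x) ≤ lnp (K / m) + lnp (m / x) := by
    calc lnp (K / x) = lnp (K / m * (m / x)) := by rw [div_mul_div_cancel₀ hm0.ne']
      _ ≤ lnp (K / m) + lnp (m / x) := lnp_mul_le (by positivity)
  have hpow := add_lnp_pow_le k (ε := 1 / 2) (by norm_num) (lnp_nonneg (K / m))
    ((one_le_div hx).mpr hxm)
  rw [show (k : ℝ) / (1 / 2) = 2 * k by ring] at hpow
  have hscale : m⁻¹ * (m / x) ^ (1 / 2 : ℝ) = m ^ (-(1 / 2) : ℝ) * x ^ (-(1 / 2) : ℝ) := by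
    rw [← rpow_neg_one, div_rpow hm0.le hx.le, div_eq_mul_inv, ← rpow_neg hx.le,
      ← mul_assoc, ← rpow_add hm0]
    norm_num
  calc (max c x)⁻¹ * lnp (K / x) ^ k ≤ m⁻¹ * (lnp (K / m) + lnp (m / x)) ^ k := by
        gcongr
        · exact pow_nonneg (lnp_nonneg _) k
        · exact lnp_nonneg _
    _ ≤ m⁻¹ * (2 ^ k * (lnp (K / m) ^ k + (2 * k) ^ k) * (m / x) ^ (1 / 2 : ℝ)) := by gcongr
    _ = 2 ^ k * (lnp (K / m) ^ k + (2 * k) ^ k) *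
          (m ^ (-(1 / 2) : ℝ) * x ^ (-(1 / 2) : ℝ)) := by
        rw [← hscale]
        ring

lemma integrand_le_of_ge {m x : ℝ} (hK : 0 ≤ K) (hc : c ≤ m) (hm : 0 < m) (hmx : m ≤ x) :
    (max c x)⁻¹ * lnp (K / x) ^ k ≤ lnp (K / m) ^ k * x⁻¹ := by
  have hx : 0 < x := hm.trans_le hmx
  rw [max_eq_right (hc.trans hmx), mul_comm]
  gcongr
  · exact lnp_nonneg _
  · exact lnp_mono (div_le_div_of_nonneg_left hK hm hmx)

variable (K) in
lemma integral_integrand_le_of_le_max {a d : ℝ} (ha : 0 ≤ a) (had : a ≤ d)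
    (hdm : d ≤ max c a) :
    IntervalIntegrable (fun x => (max c x)⁻¹ * lnp (K / x) ^ k) volume a d ∧
      ∫ x in a..d, (max c x)⁻¹ * lnp (K / x) ^ k ≤
        2 ^ (k + 1) * (lnp (K / max c a) ^ k + (2 * k) ^ k) := by
  set m := max c a
  set A := 2 ^ k * (lnp (K / m) ^ k + (2 * k) ^ k)
  have hg : IntervalIntegrable (fun x => A * (m ^ (-(1 / 2) : ℝ) * x ^ (-(1 / 2) : ℝ)))
      volume a d :=
    ((intervalIntegrable_rpow' (by norm_num)).const_mul _).const_mul _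
  have hle : ∀ x ∈ Ioc a d,
      (max c x)⁻¹ * lnp (K / x) ^ k ≤ A * (m ^ (-(1 / 2) : ℝ) * x ^ (-(1 / 2) : ℝ)) :=
    fun x hx => integrand_le_of_le k (ha.trans_lt hx.1) (hx.2.trans hdm)
      (max_le_max_left c hx.1.le)
  have hf := intervalIntegrable_of_nonneg_of_le had (measurable_integrand k)
    (fun x hx => integrand_nonneg k (ha.trans hx.1.le)) hle hg
  refine ⟨hf, ?_⟩
  calc ∫ x in a..d, (max c x)⁻¹ * lnp (K / x) ^ k
      ≤ ∫ x in a..d, A * (m ^ (-(1 / 2) : ℝ) * x ^ (-(1 / 2) : ℝ)) :=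
        integral_mono_on_of_le_Ioo had hf hg fun x hx => hle x (Ioo_subset_Ioc_self hx)
    _ ≤ A * 2 := by
        rw [intervalIntegral.integral_const_mul]
        have hA : 0 ≤ A := by have := lnp_nonneg (K / m); positivity
        exact mul_le_mul_of_nonneg_left (integral_rpow_neg_half_le ha had hdm) hA
    _ = 2 ^ (k + 1) * (lnp (K / m) ^ k + (2 * k) ^ k) := by ring

lemma integral_integrand_le_of_ge {m b : ℝ} (hK : 0 ≤ K) (hc : c ≤ m) (hm : 0 < m)
    (hmb : m ≤ b) :
    IntervalIntegrable (fun x => (max c x)⁻¹ * lnp (K / x) ^ k) volume m b ∧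
      ∫ x in m..b, (max c x)⁻¹ * lnp (K / x) ^ k ≤ lnp (K / m) ^ k * lnp (b / m) := by
  have hg : IntervalIntegrable (fun x => lnp (K / m) ^ k * x⁻¹) volume m b := by
    refine IntervalIntegrable.const_mul ?_ _
    rw [intervalIntegrable_inv_iff, uIcc_of_le hmb]
    exact Or.inr fun h0 => hm.not_ge h0.1
  have hle : ∀ x ∈ Ioc m b, (max c x)⁻¹ * lnp (K / x) ^ k ≤ lnp (K / m) ^ k * x⁻¹ :=
    fun x hx => integrand_le_of_ge k hK hc hm hx.1.le
  have hf := intervalIntegrable_of_nonneg_of_le hmb (measurable_integrand k)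
    (fun x hx => integrand_nonneg k (hm.le.trans hx.1.le)) hle hg
  refine ⟨hf, ?_⟩
  calc ∫ x in m..b, (max c x)⁻¹ * lnp (K / x) ^ k
      ≤ ∫ x in m..b, lnp (K / m) ^ k * x⁻¹ :=
        integral_mono_on_of_le_Ioo hmb hf hg fun x hx => hle x (Ioo_subset_Ioc_self hx)
    _ = lnp (K / m) ^ k * log (b / m) := by
        rw [intervalIntegral.integral_const_mul, integral_inv_of_pos hm (hm.trans_le hmb)]
    _ ≤ lnp (K / m) ^ k * lnp (b / m) := by
        gcongr
        · exact pow_nonneg (lnp_nonneg _) k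
        · exact log_le_lnp (div_pos (hm.trans_le hmb) hm)

end Integrand

noncomputable def integralBoundPoly (k : ℕ) : ℝ[X] :=
  C ((2 : ℝ) ^ (k + 1) * (2 * k) ^ k) + C (2 ^ (k + 1)) * X ^ k + X ^ (k + 1)

lemma integralBoundPoly_coeff_nonneg (k n : ℕ) : 0 ≤ (integralBoundPoly k).coeff n := by
  simp only [integralBoundPoly, coeff_add, coeff_C, coeff_C_mul, coeff_X_pow]
  split_ifs <;> positivity

lemma eval_integralBoundPoly (k : ℕ) (L : ℝ) :
    (integralBoundPoly k).eval L = 2 ^ (k + 1) * (L ^ k + (2 * k) ^ k) + L ^ k * L := by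
  simp only [integralBoundPoly, eval_add, eval_mul, eval_C, eval_pow, eval_X]
  ring

theorem stmt5 (k : ℕ) :
    ∃ P : Polynomial ℝ, (∀ n, 0 ≤ P.coeff n) ∧
      ∀ a b c K : ℝ, 0 ≤ a → a ≤ b → 0 ≤ c → 0 ≤ K → 0 < max c a →
        ∫ x in a..b, (max c x)⁻¹ * lnp (K / x) ^ k ≤
          P.eval (lnp (max K b / max c a)) := by
  refine ⟨integralBoundPoly k, integralBoundPoly_coeff_nonneg k, ?_⟩
  intro a b c K ha hab _ hK hm
  set m := max c a
  set L := lnp (max K b / m)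
  have hL : 0 ≤ L := lnp_nonneg _
  have hKm : 0 ≤ lnp (K / m) := lnp_nonneg _
  have hKL : lnp (K / m) ≤ L := lnp_mono (by gcongr; exact le_max_left _ _)
  have hbL : lnp (b / m) ≤ L := lnp_mono (by gcongr; exact le_max_right _ _)
  have hhead : 2 ^ (k + 1) * (lnp (K / m) ^ k + (2 * k) ^ k) ≤
      2 ^ (k + 1) * (L ^ k + (2 * k) ^ k) := by
    gcongr
  rw [eval_integralBoundPoly]
  rcases le_total b m with hbm | hmb
  · have hint := (integral_integrand_le_of_le_max K k ha hab hbm).2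
    have : 0 ≤ L ^ k * L := by positivity
    linarith
  · obtain ⟨hi₁, h₁⟩ := integral_integrand_le_of_le_max K k ha (le_max_right c a) le_rfl
    obtain ⟨hi₂, h₂⟩ := integral_integrand_le_of_ge k hK (le_max_left c a) hm hmb
    have htail : lnp (K / m) ^ k * lnp (b / m) ≤ L ^ k * L := by
      have := lnp_nonneg (b / m)
      gcongr
    rw [← integral_add_adjacent_intervals hi₁ hi₂]
    linarith
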